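/- Let M be a nonempty finite index set, K > 0 a real constant, and let J be a finite index set containing a distinguished element k. For each m ∈ M and j ∈ J let β_{m,j} > 0. For q > 0 define ϖ(q) = Σ_{m∈M} √(K·q·β_{m,k}²)·Π_{n∈M, n≠m} √(K·q·β_{n,k} + 1) and, for j ∈ J, ϑ_j(q) = Π_{m∈M} √(K·q·β_{m,j} + 1). Fix p̂_j > 0 for each j ∈ J and set b_j = Σ_{m∈M} K·β_{m,j}·p̂_j/(K·β_{m,j}·p̂_j + 1) for j ≠ k, b_k = 2·(d/dt) ln ϖ(e^t) evaluated at t = ln(p̂_k), and d = ln(ϖ(p̂_k)²·Π_{j∈J, j≠k} ϑ_j(p̂_j)²) − Σ_{j∈J} b_j·ln(p̂_j). Then for all choices of p_j > 0 (j ∈ J) one has ϖ(p_k)²·Π_{j∈J, j≠k} ϑ_j(p_j)² ≥ e^d · Π_{j∈J} p_j^{b_j}, with equality when p_j = p̂_j for all j ∈ J. -/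

import Mathlib

/-!
In the coordinates `t_j = log p_j` the logarithm of the posynomial splits as a sum of functions of
one variable each, `2 log ϖ(e^{t_k})` and `2 log ϑ_j(e^{t_j})`. Log-convexity is preserved by
products, square roots and (thanks to Hölder's inequality) sums, and `t ↦ c e^t` is log-linear,
so each of these functions is convex; the `b_j` are their derivatives at `log p̂_j`. A convex
function lies above its tangent lines, so summing the tangent inequalities and exponentiating
gives the monomial lower bound, which is tight at the point of tangency `p = p̂`.
-/

open Real Set Finset

structure LogConvexOn {E : Type*} [AddCommGroup E] [Module ℝ E] (D : Set E) (f : E → ℝ) :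
    Prop where
  pos : ∀ x ∈ D, 0 < f x
  convexOn_log : ConvexOn ℝ D fun x => log (f x)

/-- Hölder's inequality for two terms, obtained from weighted AM-GM after normalising both
sums to `1`. -/
theorem add_rpow_mul_rpow_le {x₁ x₂ y₁ y₂ a b : ℝ} (hx₁ : 0 < x₁) (hx₂ : 0 < x₂)
    (hy₁ : 0 < y₁) (hy₂ : 0 < y₂) (ha : 0 ≤ a) (hb : 0 ≤ b) (hab : a + b = 1) :
    x₁ ^ a * y₁ ^ b + x₂ ^ a * y₂ ^ b ≤ (x₁ + x₂) ^ a * (y₁ + y₂) ^ b := by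
  set X := x₁ + x₂
  set Y := y₁ + y₂
  have hX : 0 < X := by positivity
  have hY : 0 < Y := by positivity
  have hscale : ∀ {x y : ℝ}, 0 ≤ x → 0 ≤ y →
      x ^ a * y ^ b = X ^ a * Y ^ b * ((x / X) ^ a * (y / Y) ^ b) := fun hx hy => by
    rw [div_rpow hx hX.le, div_rpow hy hY.le]
    field_simp
  have amgm : ∀ {x y : ℝ}, 0 ≤ x → 0 ≤ y →
      (x / X) ^ a * (y / Y) ^ b ≤ a * (x / X) + b * (y / Y) :=
    fun hx hy => geom_mean_le_arith_mean2_weighted ha hb (by positivity) (by positivity) hab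
  have hXY : 0 ≤ X ^ a * Y ^ b := by positivity
  calc x₁ ^ a * y₁ ^ b + x₂ ^ a * y₂ ^ b
      = X ^ a * Y ^ b * ((x₁ / X) ^ a * (y₁ / Y) ^ b + (x₂ / X) ^ a * (y₂ / Y) ^ b) := by
        rw [hscale hx₁.le hy₁.le, hscale hx₂.le hy₂.le]; ring
    _ ≤ X ^ a * Y ^ b * ((a * (x₁ / X) + b * (y₁ / Y)) + (a * (x₂ / X) + b * (y₂ / Y))) := by
        gcongr
        exacts [amgm hx₁.le hy₁.le, amgm hx₂.le hy₂.le]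
    _ = X ^ a * Y ^ b := by
        field_simp
        linear_combination (X * Y) * hab

namespace LogConvexOn

variable {E : Type*} [AddCommGroup E] [Module ℝ E] {D : Set E} {f g : E → ℝ}

theorem le_rpow_mul_rpow (hf : LogConvexOn D f) {x y : E} (hx : x ∈ D) (hy : y ∈ D) {a b : ℝ}
    (ha : 0 ≤ a) (hb : 0 ≤ b) (hab : a + b = 1) : f (a • x + b • y) ≤ f x ^ a * f y ^ b := by
  have h := hf.convexOn_log.2 hx hy ha hb hab
  rw [← exp_le_exp, exp_log (hf.pos _ (hf.convexOn_log.1 hx hy ha hb hab))] at h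
  simpa only [smul_eq_mul, exp_add, rpow_def_of_pos (hf.pos x hx),
    rpow_def_of_pos (hf.pos y hy), mul_comm a, mul_comm b] using h

theorem of_le_rpow_mul_rpow (hD : Convex ℝ D) (hpos : ∀ x ∈ D, 0 < f x)
    (h : ∀ x ∈ D, ∀ y ∈ D, ∀ a b : ℝ, 0 ≤ a → 0 ≤ b → a + b = 1 →
      f (a • x + b • y) ≤ f x ^ a * f y ^ b) :
    LogConvexOn D f := by
  refine ⟨hpos, hD, fun x hx y hy a b ha hb hab => ?_⟩
  have hxy := h x hx y hy a b ha hb hab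
  rw [← log_le_log_iff (hpos _ (hD hx hy ha hb hab)) (by positivity [hpos x hx, hpos y hy]),
    log_mul (by positivity [hpos x hx]) (by positivity [hpos y hy]),
    log_rpow (hpos x hx), log_rpow (hpos y hy)] at hxy
  simpa only [smul_eq_mul] using hxy

theorem const (hD : Convex ℝ D) {c : ℝ} (hc : 0 < c) : LogConvexOn D fun _ => c :=
  ⟨fun _ _ => hc, convexOn_const _ hD⟩

theorem mul (hf : LogConvexOn D f) (hg : LogConvexOn D g) : LogConvexOn D fun x => f x * g x :=
  ⟨fun x hx => mul_pos (hf.pos x hx) (hg.pos x hx),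
    (hf.convexOn_log.add hg.convexOn_log).congr fun x hx =>
      (log_mul (hf.pos x hx).ne' (hg.pos x hx).ne').symm⟩

theorem pow (hf : LogConvexOn D f) (n : ℕ) : LogConvexOn D fun x => f x ^ n :=
  ⟨fun x hx => pow_pos (hf.pos x hx) n,
    (hf.convexOn_log.smul n.cast_nonneg).congr fun x _ => (log_pow (f x) n).symm⟩

theorem sqrt (hf : LogConvexOn D f) : LogConvexOn D fun x => √(f x) :=
  ⟨fun x hx => sqrt_pos.2 (hf.pos x hx),
    (hf.convexOn_log.smul (by norm_num : (0 : ℝ) ≤ 1 / 2)).congr fun x hx => by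
      simp only [smul_eq_mul, log_sqrt (hf.pos x hx).le]; ring⟩

theorem add (hf : LogConvexOn D f) (hg : LogConvexOn D g) : LogConvexOn D fun x => f x + g x :=
  of_le_rpow_mul_rpow hf.convexOn_log.1 (fun x hx => add_pos (hf.pos x hx) (hg.pos x hx))
    fun x hx y hy a b ha hb hab =>
      calc f (a • x + b • y) + g (a • x + b • y)
          ≤ f x ^ a * f y ^ b + g x ^ a * g y ^ b :=
            add_le_add (hf.le_rpow_mul_rpow hx hy ha hb hab) (hg.le_rpow_mul_rpow hx hy ha hb hab)
        _ ≤ (f x + g x) ^ a * (f y + g y) ^ b :=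
            add_rpow_mul_rpow_le (hf.pos x hx) (hg.pos x hx) (hf.pos y hy) (hg.pos y hy) ha hb hab

theorem prod (hD : Convex ℝ D) {ι : Type*} {s : Finset ι} {f : ι → E → ℝ}
    (hf : ∀ i ∈ s, LogConvexOn D (f i)) : LogConvexOn D fun x => ∏ i ∈ s, f i x := by
  rw [← Finset.prod_fn]
  exact Finset.prod_induction f (LogConvexOn D) (fun _ _ => mul) (const hD one_pos) hf

theorem sum {ι : Type*} {s : Finset ι} (hs : s.Nonempty) {f : ι → E → ℝ}
    (hf : ∀ i ∈ s, LogConvexOn D (f i)) : LogConvexOn D fun x => ∑ i ∈ s, f i x := by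
  rw [← Finset.sum_fn]
  exact Finset.sum_induction_nonempty f (LogConvexOn D) (fun _ _ => add) hs hf

theorem pos_of_comp_exp {f : ℝ → ℝ} (hf : LogConvexOn univ fun t => f (exp t)) {q : ℝ}
    (hq : 0 < q) : 0 < f q := by
  simpa only [exp_log hq] using hf.pos (log q) (mem_univ _)

end LogConvexOn

theorem logConvexOn_exp : LogConvexOn univ exp :=
  ⟨fun x _ => exp_pos x, (convexOn_id convex_univ).congr fun x _ => (log_exp x).symm⟩

theorem ConvexOn.add_mul_sub_le_of_hasDerivAt {S : Set ℝ} {f : ℝ → ℝ} {f' x y : ℝ}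
    (hf : ConvexOn ℝ S f) (hx : x ∈ S) (hy : y ∈ S) (hf' : HasDerivAt f f' x) :
    f x + f' * (y - x) ≤ f y := by
  rcases lt_trichotomy x y with hxy | rfl | hxy
  · have h := hf.le_slope_of_hasDerivAt hx hy hxy hf'
    rw [slope_def_field, le_div_iff₀ (sub_pos.2 hxy)] at h
    linarith
  · simp
  · have h := hf.slope_le_of_hasDerivAt hy hx hxy hf'
    rw [slope_def_field, div_le_iff₀ (sub_pos.2 hxy)] at h
    linarith

section MonomialBound

variable {κ : Type*} {J : Finset κ}

theorem prod_rpow_eq_exp_sum_mul_log {p : κ → ℝ} (hp : ∀ j ∈ J, 0 < p j) (b : κ → ℝ) :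
    ∏ j ∈ J, p j ^ b j = exp (∑ j ∈ J, b j * log (p j)) := by
  rw [exp_sum]
  exact prod_congr rfl fun j hj => by rw [rpow_def_of_pos (hp j hj), mul_comm]

theorem exp_log_sub_sum_mul_log_mul_prod_rpow {p : κ → ℝ} (hp : ∀ j ∈ J, 0 < p j) (b : κ → ℝ)
    {G : ℝ} (hG : 0 < G) :
    exp (log G - ∑ j ∈ J, b j * log (p j)) * ∏ j ∈ J, p j ^ b j = G := by
  rw [prod_rpow_eq_exp_sum_mul_log hp, ← exp_add, sub_add_cancel, exp_log hG]

theorem exp_log_sub_sum_mul_log_mul_prod_rpow_le_prod {g : κ → ℝ → ℝ} {b p₀ p : κ → ℝ}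
    (hg : ∀ j ∈ J, LogConvexOn univ fun t => g j (exp t))
    (hb : ∀ j ∈ J, HasDerivAt (fun t => log (g j (exp t))) (b j) (log (p₀ j)))
    (hp₀ : ∀ j ∈ J, 0 < p₀ j) (hp : ∀ j ∈ J, 0 < p j) :
    exp (log (∏ j ∈ J, g j (p₀ j)) - ∑ j ∈ J, b j * log (p₀ j)) * ∏ j ∈ J, p j ^ b j ≤
      ∏ j ∈ J, g j (p j) := by
  have hlog : ∀ q : κ → ℝ, (∀ j ∈ J, 0 < q j) →
      log (∏ j ∈ J, g j (q j)) = ∑ j ∈ J, log (g j (q j)) := fun q hq =>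
    log_prod fun j hj => ((hg j hj).pos_of_comp_exp (hq j hj)).ne'
  have htangent : ∀ j ∈ J,
      log (g j (p₀ j)) + b j * (log (p j) - log (p₀ j)) ≤ log (g j (p j)) := fun j hj => by
    simpa only [exp_log (hp₀ j hj), exp_log (hp j hj)] using
      (hg j hj).convexOn_log.add_mul_sub_le_of_hasDerivAt (mem_univ _) (mem_univ (log (p j)))
        (hb j hj)
  have hG : 0 < ∏ j ∈ J, g j (p j) := prod_pos fun j hj => (hg j hj).pos_of_comp_exp (hp j hj)
  rw [prod_rpow_eq_exp_sum_mul_log hp, ← exp_add, ← exp_log hG, exp_le_exp,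
    hlog p₀ hp₀, hlog p hp]
  calc ∑ j ∈ J, log (g j (p₀ j)) - ∑ j ∈ J, b j * log (p₀ j) + ∑ j ∈ J, b j * log (p j)
      = ∑ j ∈ J, (log (g j (p₀ j)) + b j * (log (p j) - log (p₀ j))) := by
        simp only [mul_sub, sum_add_distrib, sum_sub_distrib]; ring
    _ ≤ ∑ j ∈ J, log (g j (p j)) := sum_le_sum htangent

end MonomialBound

noncomputable section PilotPower

variable {ι : Type*} (M : Finset ι) (K : ℝ) (c : ι → ℝ)

def varpi [DecidableEq ι] (q : ℝ) : ℝ :=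
  ∑ m ∈ M, √(K * q * c m ^ 2) * ∏ n ∈ M.erase m, √(K * q * c n + 1)

def vartheta (q : ℝ) : ℝ :=
  ∏ m ∈ M, √(K * q * c m + 1)

variable {M K c}

theorem logConvexOn_varpi_comp_exp [DecidableEq ι] (hM : M.Nonempty) (hK : 0 < K)
    (hc : ∀ m ∈ M, 0 < c m) : LogConvexOn univ fun t => varpi M K c (exp t) :=
  have hKexp := (LogConvexOn.const convex_univ hK).mul logConvexOn_exp
  LogConvexOn.sum hM fun m hm =>
    (hKexp.mul (.const convex_univ (pow_pos (hc m hm) 2))).sqrt.mul <|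
      .prod convex_univ fun n hn =>
        ((hKexp.mul (.const convex_univ (hc n (mem_of_mem_erase hn)))).add
          (.const convex_univ one_pos)).sqrt

theorem differentiable_log_varpi_comp_exp [DecidableEq ι] (hM : M.Nonempty) (hK : 0 < K)
    (hc : ∀ m ∈ M, 0 < c m) : Differentiable ℝ fun t => log (varpi M K c (exp t)) := by
  refine fun t => .log ?_ ((logConvexOn_varpi_comp_exp hM hK hc).pos t (mem_univ t)).ne'
  refine .fun_sum fun m hm =>
    .mul (.sqrt (by fun_prop) ?_) (.fun_finsetProd fun n hn => .sqrt (by fun_prop) ?_)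
  · have := hc m hm; positivity
  · have := hc n (mem_of_mem_erase hn); positivity

theorem logConvexOn_vartheta_comp_exp (hK : 0 < K) (hc : ∀ m ∈ M, 0 < c m) :
    LogConvexOn univ fun t => vartheta M K c (exp t) :=
  .prod convex_univ fun m hm =>
    ((((LogConvexOn.const convex_univ hK).mul logConvexOn_exp).mul
      (.const convex_univ (hc m hm))).add (.const convex_univ one_pos)).sqrt

theorem hasDerivAt_log_vartheta_sq_comp_exp (hK : 0 < K) (hc : ∀ m ∈ M, 0 < c m) {q : ℝ}
    (hq : 0 < q) :
    HasDerivAt (fun t => log (vartheta M K c (exp t) ^ 2))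
      (∑ m ∈ M, K * c m * q / (K * c m * q + 1)) (log q) := by
  have hlog : (fun t => log (vartheta M K c (exp t) ^ 2)) =
      fun t => ∑ m ∈ M, log (K * exp t * c m + 1) := by
    funext t
    have hpos : ∀ m ∈ M, 0 < K * exp t * c m + 1 := fun m hm => by
      have := hc m hm; positivity
    rw [vartheta, ← Finset.prod_pow, prod_congr rfl fun m hm => sq_sqrt (hpos m hm).le,
      log_prod fun m hm => (hpos m hm).ne']
  rw [hlog]
  have h := HasDerivAt.fun_sum fun m hm =>
    ((((hasDerivAt_exp (log q)).const_mul K).mul_const (c m)).add_const 1).log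
      (by have := hc m hm; positivity)
  simpa only [exp_log hq, mul_one, mul_right_comm K q] using h

end PilotPower

/-- Best local monomial lower bound of the FZF SINR numerator posynomial
`ϖ(p_k)² Π_{j≠k} ϑ_j(p_j)²` at the point `(p̂_j)`, with equality at `p = p̂`. -/
theorem fzf_numerator_monomial_lower_bound {ι κ : Type*} [DecidableEq ι] [DecidableEq κ] (M : Finset ι) (hM : M.Nonempty)
    (K : ℝ) (hK : 0 < K)
    (J : Finset κ) (k : κ) (hk : k ∈ J)
    (β : ι → κ → ℝ) (hβ : ∀ m ∈ M, ∀ j ∈ J, 0 < β m j)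
    (ph : κ → ℝ) (hph : ∀ j ∈ J, 0 < ph j) :
    let ϖ := fun q : ℝ => ∑ m ∈ M, Real.sqrt (K * q * (β m k) ^ 2) *
      ∏ n ∈ M.erase m, Real.sqrt (K * q * β n k + 1)
    let ϑ := fun (j : κ) (q : ℝ) => ∏ m ∈ M, Real.sqrt (K * q * β m j + 1)
    let b := fun j : κ =>
      if j = k then 2 * deriv (fun t : ℝ => Real.log (ϖ (Real.exp t))) (Real.log (ph k))
      else ∑ m ∈ M, K * β m j * ph j / (K * β m j * ph j + 1)
    let d := Real.log ((ϖ (ph k)) ^ 2 * ∏ j ∈ J.erase k, (ϑ j (ph j)) ^ 2) -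
      ∑ j ∈ J, b j * Real.log (ph j)
    (∀ p : κ → ℝ, (∀ j ∈ J, 0 < p j) →
        Real.exp d * ∏ j ∈ J, (p j) ^ (b j) ≤
          (ϖ (p k)) ^ 2 * ∏ j ∈ J.erase k, (ϑ j (p j)) ^ 2) ∧
      Real.exp d * ∏ j ∈ J, (ph j) ^ (b j) =
        (ϖ (ph k)) ^ 2 * ∏ j ∈ J.erase k, (ϑ j (ph j)) ^ 2 := by
  intro ϖ ϑ b d
  let g : κ → ℝ → ℝ := fun j q =>
    (if j = k then varpi M K (β · k) q else vartheta M K (β · j) q) ^ 2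
  have hprod : ∀ q : κ → ℝ, ∏ j ∈ J, g j (q j) = ϖ (q k) ^ 2 * ∏ j ∈ J.erase k, ϑ j (q j) ^ 2 :=
    fun q => by
      rw [← mul_prod_erase J _ hk]
      exact congrArg₂ _ (by simp only [g, if_pos]; rfl)
        (prod_congr rfl fun j hj => by simp only [g, if_neg (ne_of_mem_erase hj)]; rfl)
  have hg : ∀ j ∈ J, LogConvexOn univ fun t => g j (exp t) := fun j hj => by
    by_cases hjk : j = k
    · simp only [g, if_pos hjk]
      exact (logConvexOn_varpi_comp_exp hM hK fun m hm => hβ m hm k hk).pow 2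
    · simp only [g, if_neg hjk]
      exact (logConvexOn_vartheta_comp_exp hK fun m hm => hβ m hm j hj).pow 2
  have hb : ∀ j ∈ J, HasDerivAt (fun t => log (g j (exp t))) (b j) (log (ph j)) := fun j hj => by
    by_cases hjk : j = k
    · subst hjk
      simp only [g, b, if_pos, log_pow, Nat.cast_ofNat]
      exact ((differentiable_log_varpi_comp_exp hM hK fun m hm => hβ m hm j hk) _).hasDerivAt
        |>.const_mul 2
    · simp only [g, b, if_neg hjk]
      exact hasDerivAt_log_vartheta_sq_comp_exp hK (fun m hm => hβ m hm j hj) (hph j hj)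
  have hd : d = log (∏ j ∈ J, g j (ph j)) - ∑ j ∈ J, b j * log (ph j) := by rw [hprod]
  refine ⟨fun p hp => ?_, ?_⟩
  · rw [← hprod, hd]
    exact exp_log_sub_sum_mul_log_mul_prod_rpow_le_prod hg hb hph hp
  · rw [← hprod, hd]
    exact exp_log_sub_sum_mul_log_mul_prod_rpow hph b
      (prod_pos fun j hj => (hg j hj).pos_of_comp_exp (hph j hj))
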